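/- arXiv:1603.07131 — 2 statements merged into one kernel-verified Lean document; each statement's English description precedes it below -/
import Mathlib

section
/- Let u, s ≥ 1 and equip ℝᵘ and ℝˢ with Euclidean norms and linear maps with induced operator norms. Let P : ℝᵘ → ℝᵘ, Q : ℝˢ → ℝᵘ, R : ℝᵘ → ℝˢ, S : ℝˢ → ℝˢ be linear maps, and let ℒ > 0, ξ > 0, μ₁ ≥ 0 be constants with m(P) − ℒ‖Q‖ ≥ ξ and ‖S‖ + (1/ℒ)‖R‖ ≤ μ₁ and μ₁ < ξ. Then for every linear map A₀ : ℝᵘ → ℝˢ with ‖A₀‖ ≤ ℒ: (i) m(P + Q∘A₀) ≥ ξ > 0, so P + Q∘A₀ is invertible; and (ii) the linear map A₁ := (R + S∘A₀)∘(P + Q∘A₀)⁻¹ satisfies ‖A₁‖ ≤ ℒμ₁/ξ < ℒ. -/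
open Filter Topology

/-- The minimum expansion `m(B) = inf_{‖z‖=1} ‖B z‖` of a continuous linear map. -/
noncomputable def minExp {E F : Type*} [NormedAddCommGroup E] [NormedSpace ℝ E]
    [NormedAddCommGroup F] [NormedSpace ℝ F] (B : E →L[ℝ] F) : ℝ :=
  ⨅ z : Metric.sphere (0 : E) 1, ‖B (z : E)‖

set_option maxHeartbeats 1000000 in
/-- Propagation of cone slopes: if `m(P) - ℒ‖Q‖ ≥ ξ`, `‖S‖ + (1/ℒ)‖R‖ ≤ μ₁` and `μ₁ < ξ`,
then for any slope `A₀` with `‖A₀‖ ≤ ℒ`, the map `P + Q∘A₀` has minimum expansion at least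
`ξ > 0` (hence is invertible), and the image slope `A₁ = (R + S∘A₀)∘(P + Q∘A₀)⁻¹` satisfies
`‖A₁‖ ≤ ℒμ₁/ξ < ℒ`. -/
theorem slope_propagation
    {u s : ℕ} (hu : 1 ≤ u) (hs : 1 ≤ s)
    (P : EuclideanSpace ℝ (Fin u) →L[ℝ] EuclideanSpace ℝ (Fin u))
    (Q : EuclideanSpace ℝ (Fin s) →L[ℝ] EuclideanSpace ℝ (Fin u))
    (R : EuclideanSpace ℝ (Fin u) →L[ℝ] EuclideanSpace ℝ (Fin s))
    (S : EuclideanSpace ℝ (Fin s) →L[ℝ] EuclideanSpace ℝ (Fin s))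
    (ℒ ξ μ₁ : ℝ) (hℒ : 0 < ℒ) (hξ : 0 < ξ) (hμ₁ : 0 ≤ μ₁)
    (h1 : ξ ≤ minExp P - ℒ * ‖Q‖)
    (h2 : ‖S‖ + (1 / ℒ) * ‖R‖ ≤ μ₁)
    (h3 : μ₁ < ξ) :
    ∀ A₀ : EuclideanSpace ℝ (Fin u) →L[ℝ] EuclideanSpace ℝ (Fin s), ‖A₀‖ ≤ ℒ →
      ξ ≤ minExp (P + Q.comp A₀) ∧
      ∃ T : EuclideanSpace ℝ (Fin u) ≃L[ℝ] EuclideanSpace ℝ (Fin u),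
        (T : EuclideanSpace ℝ (Fin u) →L[ℝ] EuclideanSpace ℝ (Fin u)) = P + Q.comp A₀ ∧
        ‖(R + S.comp A₀).comp
            (T.symm : EuclideanSpace ℝ (Fin u) →L[ℝ] EuclideanSpace ℝ (Fin u))‖
          ≤ ℒ * μ₁ / ξ ∧
        ℒ * μ₁ / ξ < ℒ := by
  intro A₀ hA₀
  set B := P + Q.comp A₀ with hB
  have hQ0 : (0:ℝ) ≤ ‖Q‖ := norm_nonneg _
  have key : ∀ x, ξ * ‖x‖ ≤ ‖B x‖ := by
    intro x
    rcases eq_or_ne x 0 with rfl | hx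
    · simp
    · have hxn : 0 < ‖x‖ := norm_pos_iff.mpr hx
      set z : EuclideanSpace ℝ (Fin u) := ‖x‖⁻¹ • x with hzdef
      have hz : ‖z‖ = 1 := by
        simp [hzdef, norm_smul, abs_of_pos (inv_pos.mpr hxn),
          inv_mul_cancel₀ hxn.ne']
      have hzs : z ∈ Metric.sphere (0 : EuclideanSpace ℝ (Fin u)) 1 := by
        simpa using hz
      have hmin : minExp P ≤ ‖P z‖ := by
        apply ciInf_le _ (⟨z, hzs⟩ : Metric.sphere (0 : EuclideanSpace ℝ (Fin u)) 1)
        refine ⟨0, ?_⟩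
        rintro w ⟨a, rfl⟩
        exact norm_nonneg _
      have hQA : ‖Q (A₀ z)‖ ≤ ℒ * ‖Q‖ := by
        calc ‖Q (A₀ z)‖ ≤ ‖Q‖ * ‖A₀ z‖ := Q.le_opNorm _
          _ ≤ ‖Q‖ * (‖A₀‖ * ‖z‖) := by
              exact mul_le_mul_of_nonneg_left (A₀.le_opNorm _) hQ0
          _ ≤ ℒ * ‖Q‖ := by
              rw [hz]
              nlinarith [norm_nonneg A₀]
      have hP : ‖P z‖ ≤ ‖B z‖ + ‖Q (A₀ z)‖ := by
        have : P z = B z - Q (A₀ z) := by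
          simp [hB]
        rw [this]
        exact norm_sub_le _ _
      have hBz : ξ ≤ ‖B z‖ := by linarith
      have hBx : ‖B x‖ = ‖x‖ * ‖B z‖ := by
        have : B x = ‖x‖ • B z := by
          rw [hzdef, map_smul, smul_smul, mul_inv_cancel₀ hxn.ne', one_smul]
        rw [this, norm_smul, Real.norm_of_nonneg hxn.le]
      rw [hBx]
      nlinarith
  haveI : Nontrivial (EuclideanSpace ℝ (Fin u)) := by
    refine ⟨EuclideanSpace.single ⟨0, hu⟩ (1:ℝ), 0, fun h => ?_⟩
    have := congrArg norm h
    simp [EuclideanSpace.norm_single] at this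
  haveI : Nonempty (Metric.sphere (0 : EuclideanSpace ℝ (Fin u)) 1) :=
    (NormedSpace.sphere_nonempty.mpr zero_le_one).to_subtype
  refine ⟨?_, ?_⟩
  · refine le_ciInf ?_
    rintro ⟨z, hz⟩
    have h1 : ‖z‖ = 1 := by simpa using hz
    have := key z
    rw [h1, mul_one] at this
    exact this
  · have hinj : Function.Injective B := by
      intro a b hab
      have : B (a - b) = 0 := by simp [map_sub, hab]
      have h0 := key (a - b)
      rw [this, norm_zero] at h0
      have : ‖a - b‖ ≤ 0 := by nlinarith
      have : a - b = 0 := by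
        have := le_antisymm this (norm_nonneg _)
        simpa using this
      exact sub_eq_zero.mp this
    have hbij : Function.Bijective B :=
      ⟨hinj, (LinearMap.injective_iff_surjective (f := (B : EuclideanSpace ℝ (Fin u) →ₗ[ℝ] EuclideanSpace ℝ (Fin u)))).mp hinj⟩
    let e := LinearEquiv.ofBijective (B : EuclideanSpace ℝ (Fin u) →ₗ[ℝ] EuclideanSpace ℝ (Fin u)) hbij
    let T : EuclideanSpace ℝ (Fin u) ≃L[ℝ] EuclideanSpace ℝ (Fin u) :=
      e.toContinuousLinearEquiv
    have hT : (T : EuclideanSpace ℝ (Fin u) →L[ℝ] EuclideanSpace ℝ (Fin u)) = B := by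
      ext x; rfl
    refine ⟨T, hT, ?_, ?_⟩
    · apply ContinuousLinearMap.opNorm_le_bound
      · positivity
      intro y
      obtain ⟨x, hTx⟩ : ∃ x, B x = y :=
        ⟨T.symm y, by rw [← hT]; exact T.apply_symm_apply y⟩
      have hTapp : ∀ v, T v = B v := fun v => by rw [← hT]; rfl
      have hsy : T.symm y = x := T.symm_apply_eq.mpr (by rw [hTapp, hTx])
      have hx1 : ξ * ‖x‖ ≤ ‖y‖ := by
        have := key x
        rwa [hTx] at this
      have hnum : ‖(R + S.comp A₀) x‖ ≤ ℒ * μ₁ * ‖x‖ := by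
        have h4 : ‖(R + S.comp A₀) x‖ ≤ ‖R x‖ + ‖S (A₀ x)‖ := by
          simpa using norm_add_le (R x) (S (A₀ x))
        have h5 : ‖R x‖ ≤ ‖R‖ * ‖x‖ := R.le_opNorm _
        have h6 : ‖S (A₀ x)‖ ≤ ‖S‖ * (‖A₀‖ * ‖x‖) := by
          calc ‖S (A₀ x)‖ ≤ ‖S‖ * ‖A₀ x‖ := S.le_opNorm _
            _ ≤ ‖S‖ * (‖A₀‖ * ‖x‖) :=
              mul_le_mul_of_nonneg_left (A₀.le_opNorm _) (norm_nonneg _)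
        have h7 : ℒ * ‖S‖ + ‖R‖ ≤ ℒ * μ₁ := by
          have := mul_le_mul_of_nonneg_left h2 hℒ.le
          have hL : ℒ * ((1 / ℒ) * ‖R‖) = ‖R‖ := by
            field_simp
          nlinarith
        have h6' : ‖S (A₀ x)‖ ≤ ℒ * ‖S‖ * ‖x‖ := by
          nlinarith [mul_le_mul_of_nonneg_right
            (mul_le_mul_of_nonneg_left hA₀ (norm_nonneg S)) (norm_nonneg x)]
        have h8 := mul_le_mul_of_nonneg_right h7 (norm_nonneg x)
        nlinarith
      calc ‖((R + S.comp A₀).comp (T.symm : EuclideanSpace ℝ (Fin u) →L[ℝ] EuclideanSpace ℝ (Fin u))) y‖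
          = ‖(R + S.comp A₀) x‖ := by
            rw [ContinuousLinearMap.comp_apply, ContinuousLinearEquiv.coe_coe, hsy]
        _ ≤ ℒ * μ₁ * ‖x‖ := hnum
        _ ≤ ℒ * μ₁ / ξ * ‖y‖ := by
            rw [div_mul_eq_mul_div, le_div_iff₀ hξ]
            nlinarith [mul_le_mul_of_nonneg_left hx1 (mul_nonneg hℒ.le hμ₁)]
    · rw [div_lt_iff₀ hξ]
      nlinarith
end

section
/- Let u, s ≥ 1, let D ⊆ ℝᵘ × ℝˢ be open, and let F = (F_x, F_y) : D → ℝᵘ × ℝˢ be C². Let ℒ > 0 and let ξ > 0, μ₁, μ₂, C_x, C_{y,1}, C_{y,2}, C_{y,3} ≥ 0 be constants such that for every z ∈ D: m(∂F_x/∂x(z)) − ℒ‖∂F_x/∂y(z)‖ ≥ ξ; ‖∂F_y/∂y(z)‖ + (1/ℒ)‖∂F_y/∂x(z)‖ ≤ μ₁; ‖∂F_y/∂y(z)‖ + ℒ‖∂F_x/∂y(z)‖ ≤ μ₂; (1/2)‖D²F_x(z)(h,h)‖ ≤ C_x‖h‖² for all h; (1/2)‖∂²F_y/∂x²(z)‖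 ≤ C_{y,1}; ‖∂²F_y/∂x∂y(z)‖ ≤ C_{y,2}; and (1/2)‖∂²F_y/∂y²(z)‖ ≤ C_{y,3}. Assume μ₁/ξ < 1, μ₂/ξ² < 1, and M > (ℒC_x(1 + ℒ²) + C_{y,1} + C_{y,2}ℒ + C_{y,3}ℒ²)/(ξ² − μ₂). Then for every z ∈ D and every linear map A₀ : ℝᵘ → ℝˢ with ‖A₀‖ ≤ ℒ, there exist a linear map A₁ with ‖A₁‖ ≤ ℒ and a δ > 0 such that F(J_u(z, A₀, M) ∩ B(z, δ)) ⊂ J_u(F(z), A₁, M). -/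
open Filter Topology

/-- The quadratic cone `J_u(z, A, M) = { z + (x, Ax + y) : ‖y‖ ≤ M‖x‖² }`. -/
def coneJu {E S : Type*} [NormedAddCommGroup E] [NormedSpace ℝ E]
    [NormedAddCommGroup S] [NormedSpace ℝ S]
    (z : E × S) (A : E →L[ℝ] S) (M : ℝ) : Set (E × S) :=
  {p | ∃ x : E, ∃ y : S, ‖y‖ ≤ M * ‖x‖ ^ 2 ∧ p = z + (x, A x + y)}

open Set

lemma minExp_mul_le {E F : Type*} [NormedAddCommGroup E] [NormedSpace ℝ E] [Nontrivial E]
    [NormedAddCommGroup F] [NormedSpace ℝ F] (B : E →L[ℝ] F) (x : E) :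
    minExp B * ‖x‖ ≤ ‖B x‖ := by
  rcases eq_or_ne x 0 with rfl | hx
  · simp
  · have hxn : (0:ℝ) < ‖x‖ := norm_pos_iff.2 hx
    have hv : ‖(‖x‖⁻¹ • x)‖ = 1 := by
      rw [norm_smul, norm_inv, norm_norm, inv_mul_cancel₀ hxn.ne']
    have hmem : (‖x‖⁻¹ • x) ∈ Metric.sphere (0 : E) 1 := by
      simp [hv]
    have hle : minExp B ≤ ‖B (‖x‖⁻¹ • x)‖ := by
      apply ciInf_le ⟨0, ?_⟩ (⟨_, hmem⟩ : Metric.sphere (0:E) 1)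
      rintro r ⟨v, rfl⟩
      exact norm_nonneg _
    rw [map_smul, norm_smul, norm_inv, norm_norm] at hle
    calc minExp B * ‖x‖ ≤ (‖x‖⁻¹ * ‖B x‖) * ‖x‖ := by
          exact mul_le_mul_of_nonneg_right hle hxn.le
      _ = ‖B x‖ := by field_simp

lemma taylor_aux {P V : Type*} [NormedAddCommGroup P] [NormedSpace ℝ P]
    [NormedAddCommGroup V] [NormedSpace ℝ V] {f : P → V} {D : Set P} (hD : IsOpen D)
    (hf : ContDiffOn ℝ 2 f D) {z h : P}
    (hseg : ∀ t ∈ Icc (0:ℝ) 1, z + t • h ∈ D) {K : ℝ}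
    (hbound : ∀ w ∈ D, ‖fderiv ℝ (fun v => fderiv ℝ f v) w h h‖ ≤ K) :
    ‖f (z + h) - f z - fderiv ℝ f z h‖ ≤ K / 2 := by
  have hzD : z ∈ D := by simpa using hseg 0 (by norm_num)
  have hK : 0 ≤ K := le_trans (norm_nonneg _) (hbound z hzD)
  have hg : ContDiffOn ℝ 1 (fun x => fderiv ℝ f x) D := hf.fderiv_of_isOpen hD (by norm_num)
  have hgdiff : ∀ w ∈ D, DifferentiableAt ℝ (fun x => fderiv ℝ f x) w := fun w hw =>
    (hg.differentiableOn one_ne_zero).differentiableAt (hD.mem_nhds hw)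
  have hfdiff : ∀ w ∈ D, DifferentiableAt ℝ f w := fun w hw =>
    (hf.differentiableOn (by norm_num)).differentiableAt (hD.mem_nhds hw)
  have hγ : ∀ t : ℝ, HasDerivAt (fun t : ℝ => z + t • h) h t := by
    intro t
    simpa using ((hasDerivAt_id t).smul_const h).const_add z
  -- derivative of t ↦ fderiv f (z + t•h) applied to h
  have hφ : ∀ t ∈ Icc (0:ℝ) 1,
      HasDerivAt (fun t : ℝ => fderiv ℝ f (z + t • h) h)
        (fderiv ℝ (fun v => fderiv ℝ f v) (z + t • h) h h) t := by
    intro t ht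
    have h1 : HasFDerivAt (fun x => fderiv ℝ f x)
        (fderiv ℝ (fun v => fderiv ℝ f v) (z + t • h)) (z + t • h) :=
      (hgdiff _ (hseg t ht)).hasFDerivAt
    have h2 : HasDerivAt (fun t : ℝ => fderiv ℝ f (z + t • h))
        (fderiv ℝ (fun v => fderiv ℝ f v) (z + t • h) h) t :=
      h1.comp_hasDerivAt t (hγ t)
    simpa using h2.clm_apply (hasDerivAt_const t h)
  have hφbd : ∀ t ∈ Icc (0:ℝ) 1,
      ‖fderiv ℝ f (z + t • h) h - fderiv ℝ f z h‖ ≤ K * t := by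
    intro t ht
    have := (convex_Icc (0:ℝ) 1).norm_image_sub_le_of_norm_hasDerivWithin_le
      (f := fun t : ℝ => fderiv ℝ f (z + t • h) h)
      (f' := fun t : ℝ => fderiv ℝ (fun v => fderiv ℝ f v) (z + t • h) h h)
      (fun s hs => (hφ s hs).hasDerivWithinAt)
      (fun s hs => hbound _ (hseg s hs)) (Set.left_mem_Icc.2 zero_le_one) ht
    simpa [Real.norm_eq_abs, abs_of_nonneg ht.1] using this
  set c : V := fderiv ℝ f z h with hc
  have hχ : ∀ t ∈ Icc (0:ℝ) 1,
      HasDerivAt (fun t : ℝ => f (z + t • h) - f z - t • c)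
        (fderiv ℝ f (z + t • h) h - c) t := by
    intro t ht
    have h1 : HasDerivAt (fun t : ℝ => f (z + t • h)) (fderiv ℝ f (z + t • h) h) t :=
      (hfdiff _ (hseg t ht)).hasFDerivAt.comp_hasDerivAt t (hγ t)
    simpa [Pi.sub_def] using (h1.sub_const (f z)).sub (((hasDerivAt_id t).smul_const c))
  have key : ∀ t ∈ Icc (0:ℝ) 1, ‖f (z + t • h) - f z - t • c‖ ≤ K * t ^ 2 / 2 := by
    intro t ht
    have hB : ∀ x : ℝ, HasDerivAt (fun t : ℝ => K * t ^ 2 / 2) (K * x) x := by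
      intro x
      have := ((hasDerivAt_pow 2 x).const_mul K).div_const 2
      exact this.congr_deriv (by ring)
    have := image_norm_le_of_norm_deriv_right_le_deriv_boundary
      (f := fun t : ℝ => f (z + t • h) - f z - t • c)
      (f' := fun t : ℝ => fderiv ℝ f (z + t • h) h - c)
      (a := 0) (b := 1)
      (fun s hs => (hχ s hs).continuousAt.continuousWithinAt)
      (fun s hs => (hχ s (Ico_subset_Icc_self hs)).hasDerivWithinAt.mono
        (fun x hx => hx))
      (by simp) hB
      (fun s hs => by
        have := hφbd s (Ico_subset_Icc_self hs)
        simpa [hc] using this)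
    exact this ht
  have := key 1 (Set.right_mem_Icc.2 zero_le_one)
  simpa using this

set_option maxHeartbeats 1000000

/-- Quadratic cone invariance with the improved constant
`M > (ℒC_x(1 + ℒ²) + C_{y,1} + C_{y,2}ℒ + C_{y,3}ℒ²)/(ξ² − μ₂)`: the image under `F` of a
sufficiently small piece of the quadratic cone `J_u(z, A₀, M)` is contained in a quadratic
cone `J_u(F(z), A₁, M)` with `‖A₁‖ ≤ ℒ`. -/
theorem cone_invariance_second_derivative_improved
    {u s : ℕ} (hu : 1 ≤ u) (hs : 1 ≤ s)
    (D : Set (EuclideanSpace ℝ (Fin u) × EuclideanSpace ℝ (Fin s)))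
    (hD : IsOpen D)
    (F : EuclideanSpace ℝ (Fin u) × EuclideanSpace ℝ (Fin s) →
      EuclideanSpace ℝ (Fin u) × EuclideanSpace ℝ (Fin s))
    (hF : ContDiffOn ℝ 2 F D)
    (ℒ ξ μ₁ μ₂ Cx Cy1 Cy2 Cy3 M : ℝ)
    (hℒ : 0 < ℒ) (hξ : 0 < ξ) (hμ₁ : 0 ≤ μ₁) (hμ₂ : 0 ≤ μ₂)
    (hCx : 0 ≤ Cx) (hCy1 : 0 ≤ Cy1) (hCy2 : 0 ≤ Cy2) (hCy3 : 0 ≤ Cy3)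
    (hexp : ∀ z ∈ D,
      ξ ≤ minExp ((fderiv ℝ (fun w => (F w).1) z).comp
            (ContinuousLinearMap.inl ℝ (EuclideanSpace ℝ (Fin u)) (EuclideanSpace ℝ (Fin s))))
          - ℒ * ‖(fderiv ℝ (fun w => (F w).1) z).comp
            (ContinuousLinearMap.inr ℝ (EuclideanSpace ℝ (Fin u)) (EuclideanSpace ℝ (Fin s)))‖)
    (hcon1 : ∀ z ∈ D,
      ‖(fderiv ℝ (fun w => (F w).2) z).comp
          (ContinuousLinearMap.inr ℝ (EuclideanSpace ℝ (Fin u)) (EuclideanSpace ℝ (Fin s)))‖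
        + (1 / ℒ) * ‖(fderiv ℝ (fun w => (F w).2) z).comp
          (ContinuousLinearMap.inl ℝ (EuclideanSpace ℝ (Fin u)) (EuclideanSpace ℝ (Fin s)))‖
        ≤ μ₁)
    (hcon2 : ∀ z ∈ D,
      ‖(fderiv ℝ (fun w => (F w).2) z).comp
          (ContinuousLinearMap.inr ℝ (EuclideanSpace ℝ (Fin u)) (EuclideanSpace ℝ (Fin s)))‖
        + ℒ * ‖(fderiv ℝ (fun w => (F w).1) z).comp
          (ContinuousLinearMap.inr ℝ (EuclideanSpace ℝ (Fin u)) (EuclideanSpace ℝ (Fin s)))‖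
        ≤ μ₂)
    (hCx' : ∀ z ∈ D, ∀ h : EuclideanSpace ℝ (Fin u) × EuclideanSpace ℝ (Fin s),
      (1 / 2) * ‖fderiv ℝ (fun w => fderiv ℝ (fun v => (F v).1) w) z h h‖
        ≤ Cx * (‖h.1‖ ^ 2 + ‖h.2‖ ^ 2))
    (hCy1' : ∀ z ∈ D, ∀ h k : EuclideanSpace ℝ (Fin u),
      (1 / 2) * ‖fderiv ℝ (fun w => fderiv ℝ (fun v => (F v).2) w) z
          ((h, 0) : EuclideanSpace ℝ (Fin u) × EuclideanSpace ℝ (Fin s))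
          ((k, 0) : EuclideanSpace ℝ (Fin u) × EuclideanSpace ℝ (Fin s))‖
        ≤ Cy1 * ‖h‖ * ‖k‖)
    (hCy2' : ∀ z ∈ D, ∀ (h : EuclideanSpace ℝ (Fin u)) (k : EuclideanSpace ℝ (Fin s)),
      ‖fderiv ℝ (fun w => fderiv ℝ (fun v => (F v).2) w) z
          ((h, 0) : EuclideanSpace ℝ (Fin u) × EuclideanSpace ℝ (Fin s))
          ((0, k) : EuclideanSpace ℝ (Fin u) × EuclideanSpace ℝ (Fin s))‖
        ≤ Cy2 * ‖h‖ * ‖k‖)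
    (hCy3' : ∀ z ∈ D, ∀ h k : EuclideanSpace ℝ (Fin s),
      (1 / 2) * ‖fderiv ℝ (fun w => fderiv ℝ (fun v => (F v).2) w) z
          ((0, h) : EuclideanSpace ℝ (Fin u) × EuclideanSpace ℝ (Fin s))
          ((0, k) : EuclideanSpace ℝ (Fin u) × EuclideanSpace ℝ (Fin s))‖
        ≤ Cy3 * ‖h‖ * ‖k‖)
    (hrate1 : μ₁ / ξ < 1) (hrate2 : μ₂ / ξ ^ 2 < 1)
    (hM : (ℒ * Cx * (1 + ℒ ^ 2) + Cy1 + Cy2 * ℒ + Cy3 * ℒ ^ 2) / (ξ ^ 2 - μ₂) < M) :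
    ∀ z ∈ D, ∀ A₀ : EuclideanSpace ℝ (Fin u) →L[ℝ] EuclideanSpace ℝ (Fin s), ‖A₀‖ ≤ ℒ →
      ∃ A₁ : EuclideanSpace ℝ (Fin u) →L[ℝ] EuclideanSpace ℝ (Fin s), ‖A₁‖ ≤ ℒ ∧
        ∃ δ > 0, F '' (coneJu z A₀ M ∩ Metric.ball z δ) ⊆ coneJu (F z) A₁ M := by
  intro z hz A₀ hA₀
  haveI : Nontrivial (EuclideanSpace ℝ (Fin u)) :=
    Module.nontrivial_of_finrank_pos (R := ℝ)
      (by rw [finrank_euclideanSpace_fin]; omega)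
  -- notation
  have hFxC : ContDiffOn ℝ 2 (fun w => (F w).1) D := hF.fst
  have hFyC : ContDiffOn ℝ 2 (fun w => (F w).2) D := hF.snd
  have Hexp := hexp z hz
  have Hcon1 := hcon1 z hz
  have Hcon2 := hcon2 z hz
  obtain ⟨Dxz, hDxz⟩ : ∃ L, L = fderiv ℝ (fun w => (F w).1) z := ⟨_, rfl⟩
  obtain ⟨Dyz, hDyz⟩ : ∃ L, L = fderiv ℝ (fun w => (F w).2) z := ⟨_, rfl⟩
  obtain ⟨a, hadef⟩ : ∃ L, L = Dxz.comp (ContinuousLinearMap.inl ℝ (EuclideanSpace ℝ (Fin u)) (EuclideanSpace ℝ (Fin s))) := ⟨_, rfl⟩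
  obtain ⟨b, hbdef⟩ : ∃ L, L = Dxz.comp (ContinuousLinearMap.inr ℝ (EuclideanSpace ℝ (Fin u)) (EuclideanSpace ℝ (Fin s))) := ⟨_, rfl⟩
  obtain ⟨c, hcdef⟩ : ∃ L, L = Dyz.comp (ContinuousLinearMap.inl ℝ (EuclideanSpace ℝ (Fin u)) (EuclideanSpace ℝ (Fin s))) := ⟨_, rfl⟩
  obtain ⟨d, hddef⟩ : ∃ L, L = Dyz.comp (ContinuousLinearMap.inr ℝ (EuclideanSpace ℝ (Fin u)) (EuclideanSpace ℝ (Fin s))) := ⟨_, rfl⟩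
  have Hexp' : ξ ≤ minExp a - ℒ * ‖b‖ := by rw [hadef, hbdef, hDxz]; exact Hexp
  have Hcon1' : ‖d‖ + (1 / ℒ) * ‖c‖ ≤ μ₁ := by rw [hcdef, hddef, hDyz]; exact Hcon1
  have Hcon2' : ‖d‖ + ℒ * ‖b‖ ≤ μ₂ := by rw [hddef, hbdef, hDyz, hDxz]; exact Hcon2
  -- block decompositions
  have hDFx_pair : ∀ (v : (EuclideanSpace ℝ (Fin u))) (w : (EuclideanSpace ℝ (Fin s))), Dxz (v, w) = a v + b w := by
    intro v w
    rw [show ((v, w) : ((EuclideanSpace ℝ (Fin u)) × (EuclideanSpace ℝ (Fin s)))) = ((v, 0) : ((EuclideanSpace ℝ (Fin u)) × (EuclideanSpace ℝ (Fin s)))) + ((0, w) : ((EuclideanSpace ℝ (Fin u)) × (EuclideanSpace ℝ (Fin s)))) by simp, map_add,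
      hadef, hbdef]
    simp
  have hDFy_pair : ∀ (v : (EuclideanSpace ℝ (Fin u))) (w : (EuclideanSpace ℝ (Fin s))), Dyz (v, w) = c v + d w := by
    intro v w
    rw [show ((v, w) : ((EuclideanSpace ℝ (Fin u)) × (EuclideanSpace ℝ (Fin s)))) = ((v, 0) : ((EuclideanSpace ℝ (Fin u)) × (EuclideanSpace ℝ (Fin s)))) + ((0, w) : ((EuclideanSpace ℝ (Fin u)) × (EuclideanSpace ℝ (Fin s)))) by simp, map_add,
      hcdef, hddef]
    simp
  -- the maps T and U
  obtain ⟨J, hJdef⟩ : ∃ L : (EuclideanSpace ℝ (Fin u)) →L[ℝ] ((EuclideanSpace ℝ (Fin u)) × (EuclideanSpace ℝ (Fin s))),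
      L = ContinuousLinearMap.inl ℝ (EuclideanSpace ℝ (Fin u)) (EuclideanSpace ℝ (Fin s)) + (ContinuousLinearMap.inr ℝ (EuclideanSpace ℝ (Fin u)) (EuclideanSpace ℝ (Fin s))).comp A₀ := ⟨_, rfl⟩
  have hJx : ∀ x : (EuclideanSpace ℝ (Fin u)), J x = (x, A₀ x) := by intro x; rw [hJdef]; simp
  obtain ⟨T, hTdef⟩ : ∃ L, L = Dxz.comp J := ⟨_, rfl⟩
  obtain ⟨U, hUdef⟩ : ∃ L, L = Dyz.comp J := ⟨_, rfl⟩
  have hTx : ∀ x : (EuclideanSpace ℝ (Fin u)), T x = a x + b (A₀ x) := by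
    intro x
    rw [hTdef, ContinuousLinearMap.comp_apply, hJx, hDFx_pair]
  have hUx : ∀ x : (EuclideanSpace ℝ (Fin u)), U x = c x + d (A₀ x) := by
    intro x
    rw [hUdef, ContinuousLinearMap.comp_apply, hJx, hDFy_pair]
  have hA₀x : ∀ x : (EuclideanSpace ℝ (Fin u)), ‖A₀ x‖ ≤ ℒ * ‖x‖ := fun x =>
    (A₀.le_opNorm x).trans (mul_le_mul_of_nonneg_right hA₀ (norm_nonneg x))
  -- lower bound for T
  have hT : ∀ x : (EuclideanSpace ℝ (Fin u)), ξ * ‖x‖ ≤ ‖T x‖ := by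
    intro x
    have h1 : minExp a * ‖x‖ ≤ ‖a x‖ := minExp_mul_le a x
    have h2 : ‖b (A₀ x)‖ ≤ ‖b‖ * (ℒ * ‖x‖) :=
      (b.le_opNorm _).trans (mul_le_mul_of_nonneg_left (hA₀x x) (norm_nonneg b))
    have h4 : ‖a x‖ ≤ ‖T x‖ + ‖b (A₀ x)‖ := by
      have : a x = T x - b (A₀ x) := by rw [hTx]; abel
      rw [this]
      exact norm_sub_le _ _
    have h5 : ξ * ‖x‖ ≤ (minExp a - ℒ * ‖b‖) * ‖x‖ :=
      mul_le_mul_of_nonneg_right Hexp' (norm_nonneg x)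
    rw [sub_mul] at h5
    have e : ‖b‖ * (ℒ * ‖x‖) = ℒ * ‖b‖ * ‖x‖ := by ring
    linarith only [h1, h2, h4, h5, e]
  have hTinj : Function.Injective T := by
    intro x₁ x₂ hx
    have h1 := hT (x₁ - x₂)
    rw [map_sub, hx, sub_self, norm_zero] at h1
    have h2 : ‖x₁ - x₂‖ = 0 := by
      have h3 : ξ * ‖x₁ - x₂‖ ≤ ξ * 0 := by rwa [mul_zero]
      exact le_antisymm (le_of_mul_le_mul_left h3 hξ) (norm_nonneg _)
    rwa [norm_eq_zero, sub_eq_zero] at h2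
  have hTbij : Function.Bijective (T : (EuclideanSpace ℝ (Fin u)) →ₗ[ℝ] (EuclideanSpace ℝ (Fin u))) := by
    have hinj : Function.Injective (T : (EuclideanSpace ℝ (Fin u)) →ₗ[ℝ] (EuclideanSpace ℝ (Fin u))) := hTinj
    exact ⟨hinj, LinearMap.injective_iff_surjective.1 hinj⟩
  obtain ⟨Te, hTe⟩ : ∃ Te : (EuclideanSpace ℝ (Fin u)) ≃L[ℝ] (EuclideanSpace ℝ (Fin u)), ∀ x, Te x = T x :=
    ⟨(LinearEquiv.ofBijective (T : (EuclideanSpace ℝ (Fin u)) →ₗ[ℝ] (EuclideanSpace ℝ (Fin u))) hTbij).toContinuousLinearEquiv, fun x => rfl⟩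
  have hTesymm : ∀ w : (EuclideanSpace ℝ (Fin u)), ‖Te.symm w‖ ≤ ‖w‖ / ξ := by
    intro w
    have h1 := hT (Te.symm w)
    rw [← hTe (Te.symm w), Te.apply_symm_apply] at h1
    rw [le_div_iff₀ hξ]
    linarith only [h1]
  -- definition of A₁
  obtain ⟨A₁, hA₁def⟩ : ∃ L, L = U.comp (Te.symm : (EuclideanSpace ℝ (Fin u)) →L[ℝ] (EuclideanSpace ℝ (Fin u))) := ⟨_, rfl⟩
  have hA₁app : ∀ w : (EuclideanSpace ℝ (Fin u)), A₁ w = U (Te.symm w) := by intro w; rw [hA₁def]; rfl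
  have hKcd : ‖c‖ + ℒ * ‖d‖ ≤ ℒ * μ₁ := by
    have e : ℒ * ((1 / ℒ) * ‖c‖) = ‖c‖ := by field_simp
    have h' : ℒ * ((1 / ℒ) * ‖c‖) ≤ ℒ * (μ₁ - ‖d‖) :=
      mul_le_mul_of_nonneg_left (by linarith) hℒ.le
    rw [mul_sub] at h'
    rw [e] at h'
    linarith only [h']
  have hUb : ∀ x : (EuclideanSpace ℝ (Fin u)), ‖U x‖ ≤ (ℒ * μ₁) * ‖x‖ := by
    intro x
    have h1 : ‖U x‖ ≤ ‖c x‖ + ‖d (A₀ x)‖ := by rw [hUx]; exact norm_add_le _ _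
    have h2 : ‖c x‖ ≤ ‖c‖ * ‖x‖ := c.le_opNorm x
    have h3 : ‖d (A₀ x)‖ ≤ ‖d‖ * (ℒ * ‖x‖) :=
      (d.le_opNorm _).trans (mul_le_mul_of_nonneg_left (hA₀x x) (norm_nonneg d))
    nlinarith only [h1, h2, h3, mul_le_mul_of_nonneg_right hKcd (norm_nonneg x)]
  have hμ₁ξ : μ₁ ≤ ξ := by
    have h1 := (div_lt_one hξ).1 hrate1
    linarith only [h1]
  have hA₁n : ‖A₁‖ ≤ ℒ := by
    apply ContinuousLinearMap.opNorm_le_bound _ hℒ.le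
    intro w
    rw [hA₁app]
    calc ‖U (Te.symm w)‖ ≤ (ℒ * μ₁) * ‖Te.symm w‖ := hUb _
      _ ≤ (ℒ * μ₁) * (‖w‖ / ξ) :=
          mul_le_mul_of_nonneg_left (hTesymm w) (by positivity)
      _ ≤ ℒ * ‖w‖ := by
          rw [show (ℒ * μ₁) * (‖w‖ / ξ) = (ℒ * ‖w‖) * (μ₁ / ξ) by ring]
          calc (ℒ * ‖w‖) * (μ₁ / ξ) ≤ (ℒ * ‖w‖) * 1 :=
                mul_le_mul_of_nonneg_left hrate1.le (by positivity)
            _ = ℒ * ‖w‖ := mul_one _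
  have hAT : ∀ x : (EuclideanSpace ℝ (Fin u)), A₁ (T x) = U x := by
    intro x
    rw [hA₁app, ← hTe, Te.symm_apply_apply]
  -- constants
  have hξμ : 0 < ξ ^ 2 - μ₂ := by
    have h1 := (div_lt_one (by positivity : (0:ℝ) < ξ ^ 2)).1 hrate2
    linarith only [h1]
  have hM0 : 0 < M := by
    have h1 : 0 ≤ (ℒ * Cx * (1 + ℒ ^ 2) + Cy1 + Cy2 * ℒ + Cy3 * ℒ ^ 2) / (ξ ^ 2 - μ₂) := by
      apply div_nonneg _ hξμ.le
      nlinarith only [hCy1, mul_nonneg (mul_nonneg hℒ.le hCx)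
        (by positivity : (0:ℝ) ≤ 1 + ℒ ^ 2), mul_nonneg hCy2 hℒ.le,
        mul_nonneg hCy3 (sq_nonneg ℒ)]
    linarith only [h1, hM]
  obtain ⟨c₁, hc₁def⟩ : ∃ r : ℝ, r = ‖b‖ * M + Cx * (1 + (ℒ + M) ^ 2) := ⟨_, rfl⟩
  obtain ⟨C₂, hC₂def⟩ : ∃ r : ℝ,
      r = Cy2 * M + (Cy3 + ℒ * Cx) * (2 * ℒ * M + M ^ 2) := ⟨_, rfl⟩
  obtain ⟨N₀, hN₀def⟩ : ∃ r : ℝ,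
      r = ℒ * Cx * (1 + ℒ ^ 2) + Cy1 + Cy2 * ℒ + Cy3 * ℒ ^ 2 := ⟨_, rfl⟩
  have hγpos : 0 < M * (ξ ^ 2 - μ₂) - N₀ := by
    rw [hN₀def]
    have h1 := (div_lt_iff₀ hξμ).1 hM
    linarith only [h1]
  have hc₁nn : 0 ≤ c₁ := by
    rw [hc₁def]
    have : (0:ℝ) ≤ 1 + (ℒ + M) ^ 2 := by positivity
    nlinarith only [mul_nonneg (norm_nonneg b) hM0.le, mul_nonneg hCx this]
  have hC₂nn : 0 ≤ C₂ := by
    rw [hC₂def]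
    have h1 : (0:ℝ) ≤ 2 * ℒ * M + M ^ 2 := by
      nlinarith only [mul_nonneg hℒ.le hM0.le, sq_nonneg M]
    nlinarith only [mul_nonneg hCy2 hM0.le,
      mul_nonneg (add_nonneg hCy3 (mul_nonneg hℒ.le hCx)) h1]
  have hKKnn : 0 < C₂ + 2 * M * ξ * c₁ + 1 := by
    nlinarith only [hC₂nn,
      mul_nonneg (mul_nonneg (mul_nonneg (by norm_num : (0:ℝ) ≤ 2) hM0.le) hξ.le) hc₁nn]
  obtain ⟨δ₀, hδ₀, hball⟩ := Metric.isOpen_iff.1 hD z hz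
  refine ⟨A₁, hA₁n, min δ₀ (min 1 (min (ξ / (c₁ + 1))
    ((M * (ξ ^ 2 - μ₂) - N₀) / (C₂ + 2 * M * ξ * c₁ + 1)))), ?_, ?_⟩
  · refine lt_min hδ₀ (lt_min one_pos (lt_min (by positivity) (div_pos hγpos hKKnn)))
  rintro q ⟨p, ⟨⟨x, y, hy, rfl⟩, hpball⟩, rfl⟩
  set δ := min δ₀ (min 1 (min (ξ / (c₁ + 1))
    ((M * (ξ ^ 2 - μ₂) - N₀) / (C₂ + 2 * M * ξ * c₁ + 1)))) with hδdef
  have hhδ : ‖((x, A₀ x + y) : ((EuclideanSpace ℝ (Fin u)) × (EuclideanSpace ℝ (Fin s))))‖ < δ := by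
    have := hpball
    rw [Metric.mem_ball, dist_eq_norm, add_sub_cancel_left] at this
    exact this
  have hxh : ‖x‖ ≤ ‖((x, A₀ x + y) : ((EuclideanSpace ℝ (Fin u)) × (EuclideanSpace ℝ (Fin s))))‖ := by
    simpa using norm_fst_le ((x, A₀ x + y) : ((EuclideanSpace ℝ (Fin u)) × (EuclideanSpace ℝ (Fin s))))
  have hxδ : ‖x‖ < δ := lt_of_le_of_lt hxh hhδ
  have hδ1 : δ ≤ 1 := le_trans (min_le_right _ _) (min_le_left _ _)
  have hδξ : δ ≤ ξ / (c₁ + 1) :=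
    le_trans (min_le_right _ _) (le_trans (min_le_right _ _) (min_le_left _ _))
  have hδγ : δ ≤ (M * (ξ ^ 2 - μ₂) - N₀) / (C₂ + 2 * M * ξ * c₁ + 1) :=
    le_trans (min_le_right _ _) (le_trans (min_le_right _ _) (min_le_right _ _))
  have hr1 : ‖x‖ ≤ 1 := le_of_lt (lt_of_lt_of_le hxδ hδ1)
  have hxc₁ : c₁ * ‖x‖ < ξ := by
    have h1 : ‖x‖ < ξ / (c₁ + 1) := lt_of_lt_of_le hxδ hδξ
    rw [lt_div_iff₀ (by linarith only [hc₁nn])] at h1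
    nlinarith only [h1, norm_nonneg x]
  have hrγ : (C₂ + 2 * M * ξ * c₁) * ‖x‖ ≤ M * (ξ ^ 2 - μ₂) - N₀ := by
    have h1 : ‖x‖ < (M * (ξ ^ 2 - μ₂) - N₀) / (C₂ + 2 * M * ξ * c₁ + 1) :=
      lt_of_lt_of_le hxδ hδγ
    rw [lt_div_iff₀ hKKnn] at h1
    nlinarith only [h1, norm_nonneg x]
  have hsegD : ∀ t ∈ Icc (0:ℝ) 1, z + t • ((x, A₀ x + y) : ((EuclideanSpace ℝ (Fin u)) × (EuclideanSpace ℝ (Fin s)))) ∈ D := by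
    intro t ht
    apply hball
    rw [Metric.mem_ball, dist_eq_norm, add_sub_cancel_left, norm_smul, Real.norm_eq_abs,
      abs_of_nonneg ht.1]
    have h1 : t * ‖((x, A₀ x + y) : ((EuclideanSpace ℝ (Fin u)) × (EuclideanSpace ℝ (Fin s))))‖ ≤ ‖((x, A₀ x + y) : ((EuclideanSpace ℝ (Fin u)) × (EuclideanSpace ℝ (Fin s))))‖ := by
      nlinarith only [mul_nonneg (by linarith only [ht.2] : (0:ℝ) ≤ 1 - t)
        (norm_nonneg ((x, A₀ x + y) : ((EuclideanSpace ℝ (Fin u)) × (EuclideanSpace ℝ (Fin s)))))]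
    have h2 : δ ≤ δ₀ := min_le_left _ _
    linarith only [h1, h2, hhδ]
  -- Taylor estimates
  have hRx : ‖(F (z + ((x, A₀ x + y) : ((EuclideanSpace ℝ (Fin u)) × (EuclideanSpace ℝ (Fin s)))))).1 - (F z).1 - Dxz (x, A₀ x + y)‖
      ≤ Cx * (‖x‖ ^ 2 + ‖A₀ x + y‖ ^ 2) := by
    have H : ‖(F (z + ((x, A₀ x + y) : ((EuclideanSpace ℝ (Fin u)) × (EuclideanSpace ℝ (Fin s)))))).1 - (F z).1 - Dxz (x, A₀ x + y)‖
        ≤ 2 * (Cx * (‖x‖ ^ 2 + ‖A₀ x + y‖ ^ 2)) / 2 := by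
      rw [hDxz]
      exact taylor_aux hD hFxC hsegD (fun w' hw' => by
        have h1 := hCx' w' hw' ((x, A₀ x + y) : ((EuclideanSpace ℝ (Fin u)) × (EuclideanSpace ℝ (Fin s))))
        linarith only [h1])
    linarith only [H]
  have hRy : ‖(F (z + ((x, A₀ x + y) : ((EuclideanSpace ℝ (Fin u)) × (EuclideanSpace ℝ (Fin s)))))).2 - (F z).2 - Dyz (x, A₀ x + y)‖
      ≤ Cy1 * ‖x‖ ^ 2 + Cy2 * (‖x‖ * ‖A₀ x + y‖) + Cy3 * ‖A₀ x + y‖ ^ 2 := by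
    have H : ‖(F (z + ((x, A₀ x + y) : ((EuclideanSpace ℝ (Fin u)) × (EuclideanSpace ℝ (Fin s)))))).2 - (F z).2 - Dyz (x, A₀ x + y)‖
        ≤ 2 * (Cy1 * ‖x‖ ^ 2 + Cy2 * (‖x‖ * ‖A₀ x + y‖) + Cy3 * ‖A₀ x + y‖ ^ 2) / 2 := by
      rw [hDyz]
      refine taylor_aux hD hFyC hsegD (fun w' hw' => ?_)
      have hsymm : ∀ v w : ((EuclideanSpace ℝ (Fin u)) × (EuclideanSpace ℝ (Fin s))),
          fderiv ℝ (fun w0 => fderiv ℝ (fun v0 => (F v0).2) w0) w' v w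
            = fderiv ℝ (fun w0 => fderiv ℝ (fun v0 => (F v0).2) w0) w' w v :=
        (hFyC.contDiffAt (hD.mem_nhds hw')).isSymmSndFDerivAt (by simp)
      have hb1 := hCy1' w' hw' x x
      have hb2 := hCy2' w' hw' x (A₀ x + y)
      have hb3 := hCy3' w' hw' (A₀ x + y) (A₀ x + y)
      rw [show ((x, A₀ x + y) : ((EuclideanSpace ℝ (Fin u)) × (EuclideanSpace ℝ (Fin s)))) = ((x, 0) : ((EuclideanSpace ℝ (Fin u)) × (EuclideanSpace ℝ (Fin s)))) + ((0, A₀ x + y) : ((EuclideanSpace ℝ (Fin u)) × (EuclideanSpace ℝ (Fin s)))) by simp]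
      simp only [map_add, ContinuousLinearMap.add_apply]
      rw [hsymm ((0 : (EuclideanSpace ℝ (Fin u))), A₀ x + y) ((x, (0 : (EuclideanSpace ℝ (Fin s)))))]
      refine le_trans (norm_add_le _ _) ?_
      refine le_trans (add_le_add (norm_add_le _ _)
        (le_refl ‖_ + _‖)) ?_
      refine le_trans (add_le_add_right (norm_add_le _ _) _) ?_
      nlinarith only [hb1, hb2, hb3]
    linarith only [H]
  -- algebraic identities
  have hDxh : Dxz (x, A₀ x + y) = T x + b y := by
    have h1 : b (A₀ x + y) = b (A₀ x) + b y := map_add _ _ _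
    rw [hDFx_pair, h1, hTx]
    abel
  have hDyh : Dyz (x, A₀ x + y) = U x + d y := by
    have h1 : d (A₀ x + y) = d (A₀ x) + d y := map_add _ _ _
    rw [hDFy_pair, h1, hUx]
    abel
  obtain ⟨RxV, hRxVdef⟩ : ∃ v : (EuclideanSpace ℝ (Fin u)),
      v = (F (z + ((x, A₀ x + y) : ((EuclideanSpace ℝ (Fin u)) × (EuclideanSpace ℝ (Fin s)))))).1 - (F z).1 - Dxz (x, A₀ x + y) := ⟨_, rfl⟩
  obtain ⟨RyV, hRyVdef⟩ : ∃ v : (EuclideanSpace ℝ (Fin s)),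
      v = (F (z + ((x, A₀ x + y) : ((EuclideanSpace ℝ (Fin u)) × (EuclideanSpace ℝ (Fin s)))))).2 - (F z).2 - Dyz (x, A₀ x + y) := ⟨_, rfl⟩
  obtain ⟨xp, hxpdef⟩ : ∃ v : (EuclideanSpace ℝ (Fin u)), v = (F (z + ((x, A₀ x + y) : ((EuclideanSpace ℝ (Fin u)) × (EuclideanSpace ℝ (Fin s)))))).1 - (F z).1 := ⟨_, rfl⟩
  obtain ⟨yp, hypdef⟩ : ∃ v : (EuclideanSpace ℝ (Fin s)),
      v = (F (z + ((x, A₀ x + y) : ((EuclideanSpace ℝ (Fin u)) × (EuclideanSpace ℝ (Fin s)))))).2 - (F z).2 - A₁ xp := ⟨_, rfl⟩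
  have hxp_eq : xp = T x + b y + RxV := by
    rw [hxpdef, hRxVdef, ← hDxh]
    abel
  have hyp_eq : yp = d y - A₁ (b y) + (RyV - A₁ RxV) := by
    have h1 : A₁ xp = U x + A₁ (b y) + A₁ RxV := by
      rw [hxp_eq, map_add, map_add, hAT]
    rw [hypdef, h1, hRyVdef, hDyh]
    abel
  -- norm bounds
  have hby : ‖b y‖ ≤ ‖b‖ * (M * ‖x‖ ^ 2) :=
    (b.le_opNorm y).trans (mul_le_mul_of_nonneg_left hy (norm_nonneg b))
  have hdy : ‖d y‖ ≤ ‖d‖ * (M * ‖x‖ ^ 2) :=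
    (d.le_opNorm y).trans (mul_le_mul_of_nonneg_left hy (norm_nonneg d))
  have hA₁v : ∀ v : (EuclideanSpace ℝ (Fin u)), ‖A₁ v‖ ≤ ℒ * ‖v‖ := fun v =>
    (A₁.le_opNorm v).trans (mul_le_mul_of_nonneg_right hA₁n (norm_nonneg v))
  have hRxb : ‖RxV‖ ≤ Cx * (‖x‖ ^ 2 + ‖A₀ x + y‖ ^ 2) := by rw [hRxVdef]; exact hRx
  have hRyb : ‖RyV‖ ≤ Cy1 * ‖x‖ ^ 2 + Cy2 * (‖x‖ * ‖A₀ x + y‖) + Cy3 * ‖A₀ x + y‖ ^ 2 := by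
    rw [hRyVdef]; exact hRy
  have hwn : ‖A₀ x + y‖ ≤ ℒ * ‖x‖ + M * ‖x‖ ^ 2 := by
    calc ‖A₀ x + y‖ ≤ ‖A₀ x‖ + ‖y‖ := norm_add_le _ _
      _ ≤ ℒ * ‖x‖ + M * ‖x‖ ^ 2 := add_le_add (hA₀x x) hy
  have hr2 : ‖x‖ ^ 2 ≤ ‖x‖ := by
    nlinarith only [mul_le_mul_of_nonneg_left hr1 (norm_nonneg x)]
  have hwnQ : ‖A₀ x + y‖ ≤ (ℒ + M) * ‖x‖ := by
    nlinarith only [hwn, mul_le_mul_of_nonneg_left hr2 hM0.le]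
  have hwn2Q : ‖A₀ x + y‖ ^ 2 ≤ (ℒ + M) ^ 2 * ‖x‖ ^ 2 := by
    nlinarith only [mul_self_le_mul_self (norm_nonneg (A₀ x + y)) hwnQ]
  have hRxb2 : ‖RxV‖ ≤ Cx * (1 + (ℒ + M) ^ 2) * ‖x‖ ^ 2 := by
    nlinarith only [hRxb, mul_le_mul_of_nonneg_left hwn2Q hCx]
  -- lower bound for ‖xp‖
  have hTx_ub : ‖T x‖ ≤ ‖xp‖ + ‖b y‖ + ‖RxV‖ := by
    have h1 : T x = xp - b y - RxV := by rw [hxp_eq]; abel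
    rw [h1]
    calc ‖xp - b y - RxV‖ ≤ ‖xp - b y‖ + ‖RxV‖ := norm_sub_le _ _
      _ ≤ ‖xp‖ + ‖b y‖ + ‖RxV‖ := by linarith only [norm_sub_le xp (b y)]
  have hxp_low : (ξ - c₁ * ‖x‖) * ‖x‖ ≤ ‖xp‖ := by
    rw [hc₁def]
    nlinarith only [hT x, hTx_ub, hby, hRxb2]
  have hξc : 0 ≤ ξ - c₁ * ‖x‖ := by linarith only [hxc₁]
  -- upper bound for ‖yp‖
  have hyp_ub : ‖yp‖ ≤ ‖d y‖ + ‖A₁ (b y)‖ + (‖RyV‖ + ‖A₁ RxV‖) := by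
    rw [hyp_eq]
    exact (norm_add_le _ _).trans (add_le_add (norm_sub_le _ _) (norm_sub_le _ _))
  have hw2 : ‖A₀ x + y‖ ^ 2 ≤ ℒ ^ 2 * ‖x‖ ^ 2 + (2 * ℒ * M + M ^ 2) * ‖x‖ ^ 3 := by
    have h1 : ‖A₀ x + y‖ * ‖A₀ x + y‖ ≤ (ℒ * ‖x‖ + M * ‖x‖ ^ 2) * (ℒ * ‖x‖ + M * ‖x‖ ^ 2) :=
      mul_le_mul hwn hwn (norm_nonneg _) (by positivity)
    have h2 : ‖x‖ ^ 4 ≤ ‖x‖ ^ 3 := by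
      nlinarith only [mul_le_mul_of_nonneg_left hr1 (pow_nonneg (norm_nonneg x) 3)]
    nlinarith only [h1, h2, sq_nonneg M,
      mul_nonneg (mul_nonneg hℒ.le hM0.le) (pow_nonneg (norm_nonneg x) 3)]
  have hrw : ‖x‖ * ‖A₀ x + y‖ ≤ ℒ * ‖x‖ ^ 2 + M * ‖x‖ ^ 3 := by
    nlinarith only [mul_le_mul_of_nonneg_left hwn (norm_nonneg x)]
  have hyp_num : ‖yp‖ ≤ μ₂ * M * ‖x‖ ^ 2 + N₀ * ‖x‖ ^ 2 + C₂ * ‖x‖ ^ 3 := by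
    have f2 : ‖A₁ (b y)‖ ≤ ℒ * (‖b‖ * (M * ‖x‖ ^ 2)) :=
      (hA₁v _).trans (mul_le_mul_of_nonneg_left hby hℒ.le)
    have f3 : ‖A₁ RxV‖ ≤ ℒ * (Cx * (‖x‖ ^ 2 + ‖A₀ x + y‖ ^ 2)) :=
      (hA₁v _).trans (mul_le_mul_of_nonneg_left hRxb hℒ.le)
    have f4 := mul_le_mul_of_nonneg_right Hcon2' (by positivity : (0:ℝ) ≤ M * ‖x‖ ^ 2)
    have f5 := mul_le_mul_of_nonneg_left hrw hCy2
    have f6 := mul_le_mul_of_nonneg_left hw2 hCy3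
    have f7 := mul_le_mul_of_nonneg_left hw2 (mul_nonneg hℒ.le hCx)
    rw [hN₀def, hC₂def]
    nlinarith only [hyp_ub, hdy, f2, f3, f4, f5, f6, f7, hRyb]
  -- conclusion
  refine ⟨xp, yp, ?_, ?_⟩
  · calc ‖yp‖ ≤ μ₂ * M * ‖x‖ ^ 2 + N₀ * ‖x‖ ^ 2 + C₂ * ‖x‖ ^ 3 := hyp_num
      _ ≤ M * ξ ^ 2 * ‖x‖ ^ 2 - 2 * M * ξ * c₁ * ‖x‖ ^ 3 := by
          nlinarith only [mul_le_mul_of_nonneg_right hrγ (sq_nonneg ‖x‖)]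
      _ ≤ M * ((ξ - c₁ * ‖x‖) * ‖x‖) ^ 2 := by
          nlinarith only [mul_nonneg (mul_nonneg hM0.le (sq_nonneg c₁))
            (sq_nonneg (‖x‖ * ‖x‖)), sq_nonneg ‖x‖]
      _ ≤ M * ‖xp‖ ^ 2 := by
          apply mul_le_mul_of_nonneg_left _ hM0.le
          exact pow_le_pow_left₀ (mul_nonneg hξc (norm_nonneg x)) hxp_low 2
  · rw [hypdef, hxpdef, Prod.ext_iff]
    constructor
    · simp only [Prod.fst_add]
      abel
    · simp only [Prod.snd_add]
      abel
end
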